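/- arXiv:1805.08364 — 4 statements merged into one kernel-verified Lean document; each statement's English description precedes it below -/
import Mathlib

section
/- If θ_v ∈ (0, π/2) satisfies cos θ_v = √(μ/(μ+3)), then θ_v is a critical point of V, i.e. V′(θ_v) = 0, where V(θ) = GM·√(M/2)·(M/cos θ + 4m/√(cos²θ + μ sin²θ)). -/
/-!
The condition cos² θ_v = μ/(μ+3) says exactly that cos² θ_v + μ sin² θ_v = 4 cos² θ_v, so the
square root in V equals 2 cos θ_v there. The derivative of M / cos θ is M sin θ / cos² θ, and that of
4m (cos² θ + μ sin² θ)^(-1/2) at θ_v becomes -4m(μ-1) sin θ_v cos θ_v / (2 cos θ_v)³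
= -m(μ-1) sin θ_v / (2 cos² θ_v), which cancels the first since m(μ-1) = 2M.
-/

open Real

theorem hasDerivAt_sqrt_cos_sq_add_mul_sin_sq {μ θ : ℝ} (hg : 0 < cos θ ^ 2 + μ * sin θ ^ 2) :
    HasDerivAt (fun θ => √(cos θ ^ 2 + μ * sin θ ^ 2))
      ((μ - 1) * sin θ * cos θ / √(cos θ ^ 2 + μ * sin θ ^ 2)) θ := by
  have hg' : HasDerivAt (fun θ => cos θ ^ 2 + μ * sin θ ^ 2)
      (2 * (μ - 1) * sin θ * cos θ) θ := by
    refine (((hasDerivAt_cos θ).fun_pow 2).fun_add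
      (((hasDerivAt_sin θ).fun_pow 2).const_mul μ)).congr_deriv ?_
    norm_num
    ring
  refine (hg'.sqrt hg.ne').congr_deriv ?_
  field_simp

theorem hasDerivAt_div_cos_add_div_sqrt {a b μ θ : ℝ} (hc : cos θ ≠ 0)
    (hg : 0 < cos θ ^ 2 + μ * sin θ ^ 2) :
    HasDerivAt (fun θ => a / cos θ + b / √(cos θ ^ 2 + μ * sin θ ^ 2))
      (a * sin θ / cos θ ^ 2 -
        b * ((μ - 1) * sin θ * cos θ) / √(cos θ ^ 2 + μ * sin θ ^ 2) ^ 3) θ := by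
  have hs : √(cos θ ^ 2 + μ * sin θ ^ 2) ≠ 0 := (sqrt_pos.2 hg).ne'
  refine (((hasDerivAt_const θ a).fun_div (hasDerivAt_cos θ) hc).fun_add
    ((hasDerivAt_const θ b).fun_div (hasDerivAt_sqrt_cos_sq_add_mul_sin_sq hg) hs)).congr_deriv ?_
  field_simp
  ring

theorem cos_sq_add_mul_sin_sq_eq_of_cos_sq {μ θ : ℝ} (hμ : μ + 3 ≠ 0)
    (h : cos θ ^ 2 = μ / (μ + 3)) :
    cos θ ^ 2 + μ * sin θ ^ 2 = (2 * cos θ) ^ 2 := by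
  have hμc : μ = (μ + 3) * cos θ ^ 2 := by rw [h]; field_simp
  linear_combination μ * sin_sq_add_cos_sq θ + hμc

theorem hasDerivAt_div_cos_add_div_sqrt_eq_zero {a b μ θ : ℝ} (hab : b * (μ - 1) = 8 * a)
    (hc : 0 < cos θ) (hcos : cos θ = √(μ / (μ + 3))) :
    HasDerivAt (fun θ => a / cos θ + b / √(cos θ ^ 2 + μ * sin θ ^ 2)) 0 θ := by
  have hpos : 0 < μ / (μ + 3) := sqrt_pos.1 (hcos ▸ hc)
  have hμ : μ + 3 ≠ 0 := fun h => by simp [h] at hpos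
  have hg := cos_sq_add_mul_sin_sq_eq_of_cos_sq hμ (by rw [hcos, sq_sqrt hpos.le])
  refine (hasDerivAt_div_cos_add_div_sqrt hc.ne' (by rw [hg]; positivity)).congr_deriv ?_
  rw [hg, sqrt_sq (by positivity)]
  field_simp
  linear_combination -sin θ * hab

theorem stmt_2_general (G M m μ : ℝ) (hm : 0 < m)
    (hμ : μ = (2*M + m)/m) (V : ℝ → ℝ)
    (hV : ∀ θ, V θ = G*M*Real.sqrt (M/2) *
      (M / Real.cos θ + 4*m / Real.sqrt (Real.cos θ^2 + μ * Real.sin θ^2)))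
    (θv : ℝ) (hθv : θv ∈ Set.Ioo 0 (Real.pi/2))
    (hcos : Real.cos θv = Real.sqrt (μ/(μ+3))) :
    deriv V θv = 0 := by
  have hc : 0 < cos θv := cos_pos_of_mem_Ioo ⟨by linarith [hθv.1, pi_pos], hθv.2⟩
  have hcoef : 4 * m * (μ - 1) = 8 * M := by
    rw [hμ]
    field_simp
    ring
  rw [funext hV]
  exact ((hasDerivAt_div_cos_add_div_sqrt_eq_zero hcoef hc hcos).const_mul _).deriv.trans
    (mul_zero _)

theorem stmt_2 (G M m μ : ℝ) (hG : 0 < G) (hM : 0 < M) (hm : 0 < m)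
    (hμ : μ = (2*M + m)/m) (V : ℝ → ℝ)
    (hV : ∀ θ, V θ = G*M*Real.sqrt (M/2) *
      (M / Real.cos θ + 4*m / Real.sqrt (Real.cos θ^2 + μ * Real.sin θ^2)))
    (θv : ℝ) (hθv : θv ∈ Set.Ioo 0 (Real.pi/2))
    (hcos : Real.cos θv = Real.sqrt (μ/(μ+3))) :
    deriv V θv = 0 :=
  stmt_2_general G M m μ hm hμ V hV θv hθv hcos
end

section
/- Assume 16γ > γ₀. If θ_w ∈ (0, π/2) satisfies cos θ_w = √(μ/(μ + 4√(γ/γ₀) − 1)), then W′(θ_w) = 0, where W(θ) = GM·(M/2)·(Mγ₀/cos²θ + 8mγ/(cos²θ + μ sin²θ)). -/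
open Real

/-!
On `(0, π/2)` the potential `a / cos² θ + b / (cos² θ + μ sin² θ)` has derivative
`2 sin θ cos θ (a / cos⁴ θ - b (μ - 1) / (cos² θ + μ sin² θ)²)`. The choice of `θ_w` makes
`cos² θ_w + μ sin² θ_w = 4 √(γ/γ₀) cos² θ_w`, and with `m (μ - 1) = 2M` the two terms in the
bracket cancel.
-/

lemma hasDerivAt_inv_cos_sq {x : ℝ} (hc : cos x ≠ 0) :
    HasDerivAt (fun θ => (cos θ ^ 2)⁻¹) (2 * sin x * cos x / cos x ^ 4) x := by
  refine (((hasDerivAt_cos x).fun_pow 2).inv (pow_ne_zero 2 hc)).congr_deriv ?_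
  field_simp
  ring

lemma hasDerivAt_inv_cos_sq_add_mul_sin_sq {μ x : ℝ} (hD : cos x ^ 2 + μ * sin x ^ 2 ≠ 0) :
    HasDerivAt (fun θ => (cos θ ^ 2 + μ * sin θ ^ 2)⁻¹)
      (-(2 * sin x * cos x * (μ - 1)) / (cos x ^ 2 + μ * sin x ^ 2) ^ 2) x := by
  refine ((((hasDerivAt_cos x).fun_pow 2).add
    (((hasDerivAt_sin x).fun_pow 2).const_mul μ)).inv hD).congr_deriv ?_
  simp only [Pi.add_apply]
  ring

lemma hasDerivAt_div_cos_sq_add_div {a b μ x : ℝ} (hc : cos x ≠ 0)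
    (hD : cos x ^ 2 + μ * sin x ^ 2 ≠ 0) :
    HasDerivAt (fun θ => a / cos θ ^ 2 + b / (cos θ ^ 2 + μ * sin θ ^ 2))
      (2 * sin x * cos x *
        (a / cos x ^ 4 - b * (μ - 1) / (cos x ^ 2 + μ * sin x ^ 2) ^ 2)) x := by
  simp only [div_eq_mul_inv a, div_eq_mul_inv b]
  refine (((hasDerivAt_inv_cos_sq hc).const_mul a).add
    ((hasDerivAt_inv_cos_sq_add_mul_sin_sq hD).const_mul b)).congr_deriv ?_
  ring

lemma cos_sq_add_mul_sin_sq_of_cos_sq_mul_eq {μ k x : ℝ} (h : cos x ^ 2 * (μ + k - 1) = μ) :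
    cos x ^ 2 + μ * sin x ^ 2 = k * cos x ^ 2 := by
  linear_combination μ * sin_sq_add_cos_sq x - h

theorem stmt_4_general (G M m γ₀ γ μ : ℝ) (hm : 0 < m)
    (hγ₀ : 0 < γ₀) (hγ : 0 < γ) (hμ : μ = (2*M + m)/m)
    (W : ℝ → ℝ)
    (hW : ∀ θ, W θ = G*M*(M/2) *
      (M*γ₀ / Real.cos θ^2 + 8*m*γ / (Real.cos θ^2 + μ * Real.sin θ^2)))
    (θw : ℝ) (hθw : θw ∈ Set.Ioo 0 (Real.pi/2))
    (hcos : Real.cos θw = Real.sqrt (μ/(μ + 4*Real.sqrt (γ/γ₀) - 1))) :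
    deriv W θw = 0 := by
  set r := √(γ / γ₀)
  have hc : 0 < cos θw := cos_pos_of_mem_Ioo ⟨by linarith [hθw.1, pi_pos], hθw.2⟩
  have hr : 0 < r := sqrt_pos.mpr (div_pos hγ hγ₀)
  have hc_sq : cos θw ^ 2 * (μ + 4 * r - 1) = μ := by
    have hpos : 0 < μ / (μ + 4 * r - 1) := sqrt_pos.mp (hcos ▸ hc)
    rw [hcos, sq_sqrt hpos.le, div_mul_cancel₀ _ (div_ne_zero_iff.mp hpos.ne').2]
  have hD := cos_sq_add_mul_sin_sq_of_cos_sq_mul_eq hc_sq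
  have hWeq : W = fun θ => G*M*(M/2) * (M*γ₀) / cos θ ^ 2 +
      G*M*(M/2) * (8*m*γ) / (cos θ ^ 2 + μ * sin θ ^ 2) := by
    funext θ; rw [hW θ]; ring
  rw [hWeq, (hasDerivAt_div_cos_sq_add_div hc.ne' (hD ▸ by positivity)).deriv, hD,
    mul_eq_zero_of_right]
  have hγ_eq : γ = r ^ 2 * γ₀ := by rw [sq_sqrt (div_pos hγ hγ₀).le]; field_simp
  have hμm : m * (μ - 1) = 2 * M := by rw [hμ]; field_simp; ring
  rw [hγ_eq]
  field_simp
  linear_combination -(8 * G * M ^ 2 * γ₀) * hμm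

theorem stmt_4 (G M m γ₀ γ μ : ℝ) (hG : 0 < G) (hM : 0 < M) (hm : 0 < m)
    (hγ₀ : 0 < γ₀) (hγ : 0 < γ) (hcond : 16*γ > γ₀) (hμ : μ = (2*M + m)/m)
    (W : ℝ → ℝ)
    (hW : ∀ θ, W θ = G*M*(M/2) *
      (M*γ₀ / Real.cos θ^2 + 8*m*γ / (Real.cos θ^2 + μ * Real.sin θ^2)))
    (θw : ℝ) (hθw : θw ∈ Set.Ioo 0 (Real.pi/2))
    (hcos : Real.cos θw = Real.sqrt (μ/(μ + 4*Real.sqrt (γ/γ₀) - 1))) :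
    deriv W θw = 0 :=
  stmt_4_general G M m γ₀ γ μ hm hγ₀ hγ hμ W hW θw hθw hcos
end

section
/- If C² > 2·U(0) = GM²(Mγ₀ + 8mγ), then the triple collision manifold 𝒞 = {(v,θ,w) ∈ ℝ × [−π/2, π/2] × ℝ : w² + v²·cos⁴θ/U(θ) + (C² − 2U(θ))·cos²θ/U(θ) = 0} consists exactly of the two lines {(v, π/2, 0) : v ∈ ℝ} ∪ {(v, −π/2, 0) : v ∈ ℝ}. -/
/-!
Since `μ ≥ 0`, the fraction `cos²θ / (cos²θ + μ sin²θ)` lies in `[0, 1]`, so `0 < U θ ≤ U 0` and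
hence `C² - 2 U θ > 0` for every `θ`. The defining equation of the collision manifold is then a
sum of three nonnegative terms, so it holds exactly when `w = 0` and `cos θ = 0`, i.e. when
`θ = ±π/2` on `[-π/2, π/2]`.
-/

open Real Set

lemma cos_sq_div_cos_sq_add_mul_sin_sq_le_one {μ : ℝ} (hμ : 0 ≤ μ) (θ : ℝ) :
    cos θ ^ 2 / (cos θ ^ 2 + μ * sin θ ^ 2) ≤ 1 :=
  div_le_one_of_le₀ (by nlinarith [sq_nonneg (sin θ)]) (by positivity)

lemma cos_eq_zero_iff_of_mem_Icc {θ : ℝ} (hθ : θ ∈ Icc (-(π / 2)) (π / 2)) :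
    cos θ = 0 ↔ θ = π / 2 ∨ θ = -(π / 2) := by
  constructor
  · intro hcos
    by_contra! hne
    have hθ' : θ ∈ Ioo (-(π / 2)) (π / 2) :=
      ⟨lt_of_le_of_ne hθ.1 (Ne.symm hne.2), lt_of_le_of_ne hθ.2 hne.1⟩
    exact (cos_pos_of_mem_Ioo hθ').ne' hcos
  · rintro (rfl | rfl) <;> simp

lemma sq_add_div_add_div_eq_zero_iff {w a b c U : ℝ} (ha : 0 ≤ a) (hb : 0 < b) (hU : 0 < U) :
    w ^ 2 + a * c ^ 4 / U + b * c ^ 2 / U = 0 ↔ w = 0 ∧ c = 0 := by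
  constructor
  · intro h
    have hw : 0 ≤ w ^ 2 := sq_nonneg w
    have ha' : 0 ≤ a * c ^ 4 / U := by positivity
    have hb' : 0 ≤ b * c ^ 2 / U := by positivity
    have hc : b * c ^ 2 / U = 0 := by linarith
    refine ⟨pow_eq_zero_iff two_ne_zero |>.mp (by linarith), ?_⟩
    simpa [hb.ne', hU.ne'] using hc
  · rintro ⟨rfl, rfl⟩
    simp

theorem collisionManifold_eq_of_two_mul_lt {U : ℝ → ℝ} {C : ℝ} (hUpos : ∀ θ, 0 < U θ)
    (hUlt : ∀ θ, 2 * U θ < C ^ 2) :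
    {p : ℝ × ℝ × ℝ | p.2.1 ∈ Icc (-(π / 2)) (π / 2) ∧
      p.2.2 ^ 2 + p.1 ^ 2 * cos p.2.1 ^ 4 / U p.2.1
        + (C ^ 2 - 2 * U p.2.1) * cos p.2.1 ^ 2 / U p.2.1 = 0}
    = {p : ℝ × ℝ × ℝ | ∃ v : ℝ, p = (v, π / 2, 0)} ∪
      {p : ℝ × ℝ × ℝ | ∃ v : ℝ, p = (v, -(π / 2), 0)} := by
  ext ⟨v, θ, w⟩
  simp only [mem_ofPred_eq, mem_union, Prod.mk.injEq, exists_eq_left']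
  constructor
  · rintro ⟨hθ, h⟩
    rw [sq_add_div_add_div_eq_zero_iff (sq_nonneg v) (by linarith [hUlt θ]) (hUpos θ),
      cos_eq_zero_iff_of_mem_Icc hθ] at h
    rcases h with ⟨hw, hθ' | hθ'⟩
    exacts [Or.inl ⟨hθ', hw⟩, Or.inr ⟨hθ', hw⟩]
  · have hπ := pi_pos
    rintro (⟨rfl, rfl⟩ | ⟨rfl, rfl⟩) <;>
      exact ⟨⟨by linarith, by linarith⟩, by simp⟩

theorem stmt_8 (G M m γ₀ γ μ C : ℝ) (hG : 0 < G) (hM : 0 < M) (hm : 0 < m)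
    (hγ₀ : 0 < γ₀) (hγ : 0 < γ) (hμ : μ = (2*M + m)/m) (U : ℝ → ℝ)
    (hU : ∀ θ, U θ = G*M*(M/2) *
      (M*γ₀ + 8*m*γ * Real.cos θ^2 / (Real.cos θ^2 + μ * Real.sin θ^2)))
    (hC : C^2 > G*M^2*(M*γ₀ + 8*m*γ)) :
    {p : ℝ × ℝ × ℝ | p.2.1 ∈ Set.Icc (-(Real.pi/2)) (Real.pi/2) ∧
      p.2.2^2 + p.1^2 * Real.cos p.2.1^4 / U p.2.1
        + (C^2 - 2*U p.2.1) * Real.cos p.2.1^2 / U p.2.1 = 0}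
    = {p : ℝ × ℝ × ℝ | ∃ v : ℝ, p = (v, Real.pi/2, 0)} ∪
      {p : ℝ × ℝ × ℝ | ∃ v : ℝ, p = (v, -(Real.pi/2), 0)} := by
  have hμ0 : 0 ≤ μ := hμ ▸ by positivity
  apply collisionManifold_eq_of_two_mul_lt
  · intro θ
    rw [hU]
    positivity
  · intro θ
    have hle := cos_sq_div_cos_sq_add_mul_sin_sq_le_one hμ0 θ
    rw [hU, mul_div_assoc]
    nlinarith [mul_le_mul_of_nonneg_left hle (by positivity : 0 ≤ G * M * (M / 2) * (8 * m * γ))]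
end

section
/- Let r, v : [t₀, ∞) → ℝ be C¹ with r(t) > 0, and suppose r′ = φ(t)·r·v and v′ = φ(t)·(2h·r(t) + K(t)), where φ(t) ≥ φ₀ > 0, K(t) ≥ K₀ > 0, and h < 0. If r(t) → 0 as t → ∞, then v cannot remain negative for all t ≥ t₀. Consequently r cannot be monotone decreasing to 0 on [t₀, ∞) with v(t) < 0 throughout. -/
open Filter

theorem stmt_17 (h φ₀ K₀ t₀ : ℝ) (hh : h < 0) (hφ₀ : 0 < φ₀) (hK₀ : 0 < K₀)
    (φ K r v : ℝ → ℝ)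
    (hφc : ContinuousOn φ (Set.Ici t₀)) (hKc : ContinuousOn K (Set.Ici t₀))
    (hφ : ∀ t ≥ t₀, φ₀ ≤ φ t) (hK : ∀ t ≥ t₀, K₀ ≤ K t)
    (hr : ∀ t ≥ t₀, 0 < r t)
    (hr' : ∀ t ≥ t₀, HasDerivAt r (φ t * r t * v t) t)
    (hv' : ∀ t ≥ t₀, HasDerivAt v (φ t * (2*h*r t + K t)) t) :
    ¬ (Tendsto r atTop (nhds 0) ∧ ∀ t ≥ t₀, v t < 0) := by
  rintro ⟨hlim, hvneg⟩
  set ε : ℝ := K₀ / (4 * (-h)) with hεdef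
  have hε : 0 < ε := div_pos hK₀ (by linarith)
  obtain ⟨t₁, ht₁⟩ := eventually_atTop.1
    ((hlim.eventually (Iio_mem_nhds hε)).and (eventually_ge_atTop t₀))
  have ht₁0 : t₀ ≤ t₁ := (ht₁ t₁ le_rfl).2
  set c : ℝ := φ₀ * (K₀ / 2) with hcdef
  have hc : 0 < c := by positivity
  -- derivative lower bound on [t₁, ∞)
  have hlb : ∀ t ≥ t₁, c ≤ φ t * (2*h*r t + K t) := by
    intro t ht
    have ht0 : t₀ ≤ t := le_trans ht₁0 ht
    have h1 : r t < ε := (ht₁ t ht).1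
    have h2 : K₀ ≤ K t := hK t ht0
    have h3 : K₀ / 2 ≤ 2*h*r t + K t := by
      have h1' : r t * (4 * -h) < K₀ := (lt_div_iff₀ (by linarith)).1 h1
      nlinarith
    have h4 : φ₀ ≤ φ t := hφ t ht0
    calc c = φ₀ * (K₀/2) := rfl
      _ ≤ φ t * (2*h*r t + K t) := by
        apply mul_le_mul h4 h3 (by linarith) (by linarith)
  -- g t = v t - c * t is monotone on Ici t₁
  have hmono : MonotoneOn (fun t => v t - c * t) (Set.Ici t₁) := by
    apply monotoneOn_of_deriv_nonneg (convex_Ici t₁)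
    · intro t ht
      exact (((hv' t (le_trans ht₁0 ht)).sub
        ((hasDerivAt_id t).const_mul c)).continuousAt).continuousWithinAt
    · intro t ht
      rw [interior_Ici] at ht
      exact (((hv' t (le_trans ht₁0 ht.le)).sub
        ((hasDerivAt_id t).const_mul c)).differentiableAt).differentiableWithinAt
    · intro t ht
      rw [interior_Ici] at ht
      have hd : HasDerivAt (fun t => v t - c * t) (φ t * (2*h*r t + K t) - c) t := by
        have := ((hv' t (le_trans ht₁0 ht.le)).sub
          ((hasDerivAt_id t).const_mul c))
        simp only [id, mul_one] at this
        exact this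
      rw [hd.deriv]
      have := hlb t ht.le
      linarith
  -- pick T large and derive contradiction
  set T : ℝ := t₁ + (1 - v t₁) / c with hTdef
  have hvt₁ : v t₁ < 0 := hvneg t₁ ht₁0
  have hTgt : t₁ ≤ T := by
    have h0 : 0 < (1 - v t₁) / c := div_pos (by linarith) hc
    rw [hTdef]; linarith
  have := hmono (Set.self_mem_Ici) (Set.mem_Ici.2 hTgt) hTgt
  simp only at this
  have hvT : 1 ≤ v T := by
    have hcT : c * T = c * t₁ + (1 - v t₁) := by
      rw [hTdef]; field_simp
    linarith
  have := hvneg T (le_trans ht₁0 hTgt)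
  linarith
end
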